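/- If w ≠ 0, r1 ≠ r2, r1' ≠ r2', and α ≠ α' in a field K, then the four linear equations log c = x1 + w·x2, log d = y1 + w·y2, log v = r1·x1 + w·r2·x2 + α·r1·y1 + α·w·r2·y2, log v' = r1'·x1 + w·r2'·x2 + α'·r1'·y1 + α'·w·r2'·y2 have a unique solution (x1, x2, y1, y2) ∈ K⁴ for any given values of log c, log d, log v, log v'. -/
import Mathlib


theorem stmt_1 {K : Type*} [Field K] (w r1 r2 r1' r2' α α' : K)
    (hw : w ≠ 0) (h1 : r1 ≠ r2) (h2 : r1' ≠ r2') (hα : α ≠ α')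
    (lc ld lv lv' : K) :
    ∃! s : K × K × K × K,
      lc = s.1 + w * s.2.1 ∧
      ld = s.2.2.1 + w * s.2.2.2 ∧
      lv = r1 * s.1 + w * r2 * s.2.1 + α * r1 * s.2.2.1 + α * w * r2 * s.2.2.2 ∧
      lv' = r1' * s.1 + w * r2' * s.2.1 + α' * r1' * s.2.2.1 + α' * w * r2' * s.2.2.2 := by
  have h1' : r1 - r2 ≠ 0 := sub_ne_zero.mpr h1
  have h2' : r1' - r2' ≠ 0 := sub_ne_zero.mpr h2
  have hα' : α' - α ≠ 0 := sub_ne_zero.mpr (Ne.symm hα)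
  set u := (lv - r2 * (lc + α * ld)) / (r1 - r2) with hu
  set t := (r1 * (lc + α * ld) - lv) / (w * (r1 - r2)) with ht
  set u' := (lv' - r2' * (lc + α' * ld)) / (r1' - r2') with hu'
  set t' := (r1' * (lc + α' * ld) - lv') / (w * (r1' - r2')) with ht'
  have hF1 : u + w * t = lc + α * ld := by rw [hu, ht]; field_simp; ring
  have hF2 : r1 * u + w * r2 * t = lv := by rw [hu, ht]; field_simp; ring
  have hF3 : u' + w * t' = lc + α' * ld := by rw [hu', ht']; field_simp; ring
  have hF4 : r1' * u' + w * r2' * t' = lv' := by rw [hu', ht']; field_simp; ring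
  set x1 := (α' * u - α * u') / (α' - α) with hx1
  set x2 := (α' * t - α * t') / (α' - α) with hx2
  set y1 := (u' - u) / (α' - α) with hy1
  set y2 := (t' - t) / (α' - α) with hy2
  have hG1 : x1 + α * y1 = u := by rw [hx1, hy1]; field_simp; ring
  have hG2 : x2 + α * y2 = t := by rw [hx2, hy2]; field_simp; ring
  have hG3 : x1 + α' * y1 = u' := by rw [hx1, hy1]; field_simp; ring
  have hG4 : x2 + α' * y2 = t' := by rw [hx2, hy2]; field_simp; ring
  refine ⟨(x1, x2, y1, y2), ⟨?_, ?_, ?_, ?_⟩, ?_⟩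
  · clear_value u t u' t' x1 x2 y1 y2
    show lc = x1 + w * x2
    apply mul_left_cancel₀ hα'
    linear_combination -(α' * hG1) - α' * w * hG2 + α * hG3 + α * w * hG4 - α' * hF1 + α * hF3
  · clear_value u t u' t' x1 x2 y1 y2
    show ld = y1 + w * y2
    apply mul_left_cancel₀ hα'
    linear_combination hG1 + w * hG2 - hG3 - w * hG4 + hF1 - hF3
  · clear_value u t u' t' x1 x2 y1 y2
    show lv = r1 * x1 + w * r2 * x2 + α * r1 * y1 + α * w * r2 * y2
    linear_combination -(r1 * hG1) - w * r2 * hG2 - hF2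
  · clear_value u t u' t' x1 x2 y1 y2
    show lv' = r1' * x1 + w * r2' * x2 + α' * r1' * y1 + α' * w * r2' * y2
    linear_combination -(r1' * hG3) - w * r2' * hG4 - hF4
  · rintro ⟨a, b, c, d⟩ ⟨e1, e2, e3, e4⟩
    simp only at e1 e2 e3 e4
    have hu_eq : u = a + α * c := by rw [hu, e1, e2, e3]; field_simp; ring
    have ht_eq : t = b + α * d := by rw [ht, e1, e2, e3]; field_simp; ring
    have hu'_eq : u' = a + α' * c := by rw [hu', e1, e2, e4]; field_simp; ring
    have ht'_eq : t' = b + α' * d := by rw [ht', e1, e2, e4]; field_simp; ring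
    have : x1 = a := by rw [hx1, hu_eq, hu'_eq]; field_simp; ring
    have : x2 = b := by rw [hx2, ht_eq, ht'_eq]; field_simp; ring
    have : y1 = c := by rw [hy1, hu_eq, hu'_eq]; field_simp; ring
    have : y2 = d := by rw [hy2, ht_eq, ht'_eq]; field_simp; ring
    simp only [Prod.mk.injEq]
    refine ⟨by rw [hx1, hu_eq, hu'_eq]; field_simp; ring,
            by rw [hx2, ht_eq, ht'_eq]; field_simp; ring,
            by rw [hy1, hu_eq, hu'_eq]; field_simp; ring,
            by rw [hy2, ht_eq, ht'_eq]; field_simp; ring⟩
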